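/- arXiv:1212.3004 — 5 statements merged into one kernel-verified Lean document; each statement's English description precedes it below -/
import Mathlib

section
/- Let P₁ and P₂ be probability measures on the positive integers with P₁ ≠ P₂, and suppose that the maximum of the support of P₂ is not larger than the minimum of the support of P₁, i.e. every positive integer in the support of P₂ is less than or equal to every positive integer in the support of P₁. Then for any β > 0, the speeds satisfy v(β, P₁) ≥ v(β, P₂). -/
/-!
Conditioning on the environment, `E|Xₙ| = ∫ Fₙ(ω, root) dν(ω)` for the environment marginal `ν`,
where the quenched expected depth `Fₙ(ω, x)` obeys the one-step recursion of the walk: it moves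
to the parent of `x` with probability `q(x) = 1/(1 + β ω(x))`, and otherwise to a uniform child.

If every vertex of `ω₁` has at least as many children as any vertex of `ω₂`, induction on `n`
gives `Fₙ(ω₂, x₂) ≤ Fₙ(ω₁, x₁)` whenever `|x₂| ≤ |x₁|` with equal parity: at equal depths the
walk on `ω₁` steps back less often, and otherwise every neighbour of `x₁` is at least as deep as
every neighbour of `x₂`. Comparing both laws with the constant environment
`k = min supp P₁ ≥ max supp P₂` yields `E₂|Xₙ| ≤ Fₙ(k, root) ≤ E₁|Xₙ|`. As `|Xₙ| ≤ n`, bounded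
convergence turns the almost sure speeds into the limits of `E|Xₙ|/n`, so `v₂ ≤ v₁`.
-/

open MeasureTheory Filter

noncomputable section

namespace GWSpeed

instance : MeasurableSpace ℕ+ := ⊤
instance : MeasurableSpace (List ℕ+) := ⊤

/-- An environment assigns to each Ulam–Harris vertex (a finite sequence of positive
integers, encoded as a list whose head is the last coordinate) its number of children. -/
abbrev Env := (List ℕ+) → ℕ+

open Classical in
/-- Transition probability of the `β`-biased walk on the tree `T(ω)`:
from the root, each of its children is equally likely; from any other vertex `x` with
`k = ω x` children, the parent (`x.tail`) gets probability `1/(1+βk)` and each child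
(`i :: x` for `1 ≤ i ≤ ω x`) gets `β/(1+βk)`. -/
def step (β : ℝ) (ω : Env) (x y : List ℕ+) : ℝ :=
  if x = [] then
    (if ∃ i : ℕ+, i ≤ ω x ∧ y = i :: x then 1 / ((ω x : ℕ) : ℝ) else 0)
  else if y = x.tail then 1 / (1 + β * ((ω x : ℕ) : ℝ))
  else if ∃ i : ℕ+, i ≤ ω x ∧ y = i :: x then β / (1 + β * ((ω x : ℕ) : ℝ))
  else 0

/-- `μ` is the annealed law of the `β`-biased walk in a Galton–Watson environment with
progeny distribution `P`: the probability of any cylinder event specifying the environment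
on a finite set `S` of vertices containing all vertices visited before time `n`, together
with the first `n` steps of the walk (started at the root `[]`), is the product of the
progeny probabilities and the quenched transition probabilities. -/
def IsAnnealedLaw (β : ℝ) (P : Measure ℕ+) (μ : Measure (Env × (ℕ → List ℕ+))) : Prop :=
  IsProbabilityMeasure μ ∧
  μ {p | p.2 0 = []} = 1 ∧
  ∀ (n : ℕ) (x : ℕ → List ℕ+) (S : Finset (List ℕ+)) (f : Env),
    x 0 = [] → (∀ i, i < n → x i ∈ S) →
    (μ {p | (∀ v ∈ S, p.1 v = f v) ∧ (∀ i, i ≤ n → p.2 i = x i)}).toReal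
      = (∏ v ∈ S, (P {f v}).toReal) * ∏ i ∈ Finset.range n, step β f (x i) (x (i + 1))

/-- `v` is the speed of the `β`-biased walk on the Galton–Watson tree with progeny
distribution `P`: `|X_n|/n → v` almost surely under the annealed law. -/
def HasSpeed (β : ℝ) (P : Measure ℕ+) (v : ℝ) : Prop :=
  ∃ μ : Measure (Env × (ℕ → List ℕ+)), IsAnnealedLaw β P μ ∧
    ∀ᵐ p ∂μ, Tendsto (fun n : ℕ => (((p.2 n).length : ℝ)) / (n : ℝ)) atTop (nhds v)

/-- `P₁` stochastically dominates `P₂` (and `P₁ ≠ P₂`). -/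
def StochDom (P₁ P₂ : Measure ℕ+) : Prop :=
  P₁ ≠ P₂ ∧ ∀ k : ℕ+, P₂ {n | k ≤ n} ≤ P₁ {n | k ≤ n}

/-- `Q` is a monotone coupling of `(P₁, P₂)`: a joint law of `(Z₁', Z₂')` with marginals
`P₁`, `P₂` and `Z₂' ≤ Z₁'` almost surely. -/
def IsMonotoneCoupling (P₁ P₂ : Measure ℕ+) (Q : Measure (ℕ+ × ℕ+)) : Prop :=
  IsProbabilityMeasure Q ∧ Q.map Prod.fst = P₁ ∧ Q.map Prod.snd = P₂ ∧
    Q {z | z.2 ≤ z.1} = 1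

/-- `E[1/Z₂' − 1/Z₁']` for a coupling `Q` of `(Z₁', Z₂')`. -/
def EA (Q : Measure (ℕ+ × ℕ+)) : ℝ :=
  ∫ z, (1 / ((z.2 : ℕ) : ℝ) - 1 / ((z.1 : ℕ) : ℝ)) ∂Q

open Classical in
/-- `E[(1/Z₁ − 1/Z₂)·1_{Z₁ < Z₂}]` for independent `Z₁ ~ P₁`, `Z₂ ~ P₂`. -/
def EB (P₁ P₂ : Measure ℕ+) : ℝ :=
  ∫ z : ℕ+ × ℕ+, (if z.1 < z.2 then 1 / ((z.1 : ℕ) : ℝ) - 1 / ((z.2 : ℕ) : ℝ) else 0)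
    ∂(P₁.prod P₂)

/-- `E[Z₂'(1/Z₂' − 1/Z₁')]` for a coupling `Q` of `(Z₁', Z₂')`. -/
def EC (Q : Measure (ℕ+ × ℕ+)) : ℝ :=
  ∫ z, ((z.2 : ℕ) : ℝ) * (1 / ((z.2 : ℕ) : ℝ) - 1 / ((z.1 : ℕ) : ℝ)) ∂Q

/-- The quantity `β₁` of the main theorem, for the constant `c = c_δ`. -/
def beta1 (c : ℝ) (P₁ P₂ : Measure ℕ+) (Q : Measure (ℕ+ × ℕ+)) : ℝ :=
  c * min (EB P₁ P₂ / EA Q) (EC Q / EA Q + 1)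

end GWSpeed

open ENNReal

namespace GWSpeed

def mix (q a b : ℝ≥0∞) : ℝ≥0∞ :=
  q * a + (1 - q) * b

section Mixture

variable {q q₁ q₂ a a₁ a₂ b b₁ b₂ V : ℝ≥0∞}

lemma mix_le (hq : q ≤ 1) (ha : q ≠ 0 → a ≤ V) (hb : b ≤ V) : mix q a b ≤ V := by
  rcases eq_or_ne q 0 with rfl | hq0
  · simpa [mix] using hb
  calc mix q a b ≤ q * V + (1 - q) * V := by unfold mix; gcongr; exact ha hq0
    _ = V := by rw [← add_mul, add_tsub_cancel_of_le hq, one_mul]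

lemma le_mix (hq : q ≤ 1) (ha : q ≠ 0 → V ≤ a) (hb : V ≤ b) : V ≤ mix q a b := by
  rcases eq_or_ne q 0 with rfl | hq0
  · simpa [mix] using hb
  calc V = q * V + (1 - q) * V := by rw [← add_mul, add_tsub_cancel_of_le hq, one_mul]
    _ ≤ mix q a b := by unfold mix; gcongr; exact ha hq0

lemma mix_le_mix (hq : q₁ ≤ q₂) (hq₂ : q₂ ≤ 1) (ha : a₂ ≤ a₁) (hab : a₂ ≤ b₁) (hb : b₂ ≤ b₁) :
    mix q₂ a₂ b₂ ≤ mix q₁ a₁ b₁ :=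
  calc mix q₂ a₂ b₂
      ≤ q₁ * a₂ + (q₂ - q₁) * a₂ + (1 - q₂) * b₁ := by
        rw [mix, ← add_mul, add_tsub_cancel_of_le hq]; gcongr
    _ ≤ q₁ * a₁ + (q₂ - q₁) * b₁ + (1 - q₂) * b₁ := by gcongr
    _ = mix q₁ a₁ b₁ := by
        rw [mix, add_assoc, ← add_mul, add_comm (q₂ - q₁), tsub_add_tsub_cancel hq₂ hq]

end Mixture

lemma tsum_fin_cons {α : Type*} {n : ℕ} (f : (Fin (n + 1) → α) → ℝ≥0∞) :
    ∑' x, f x = ∑' (a : α) (w : Fin n → α), f (Fin.cons a w) := by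
  rw [← (Fin.consEquiv fun _ => α).tsum_eq, ENNReal.tsum_prod']
  rfl

section Partition

variable {Ω α : Type*} [MeasurableSpace Ω] [MeasurableSpace α] [Countable α]
  [MeasurableSingletonClass α] {μ : Measure Ω} {f : Ω → α}

lemma lintegral_comp_eq_tsum (hf : Measurable f) (h : α → ℝ≥0∞) :
    ∫⁻ ω, h (f ω) ∂μ = ∑' a, h a * μ (f ⁻¹' {a}) := by
  rw [← lintegral_map (measurable_of_countable h) hf, lintegral_countable']
  simp_rw [Measure.map_apply hf (measurableSet_singleton _)]

lemma measure_eq_tsum_inter_preimage (hf : Measurable f) (s : Set Ω) :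
    μ s = ∑' a, μ (s ∩ f ⁻¹' {a}) := by
  simpa [Measure.restrict_apply (hf (measurableSet_singleton _)), Set.inter_comm] using
    lintegral_comp_eq_tsum (μ := μ.restrict s) hf 1

end Partition

theorem tendsto_lintegral_div_of_ae_tendsto {Ω : Type*} [MeasurableSpace Ω] {μ : Measure Ω}
    [IsProbabilityMeasure μ] {Y : ℕ → Ω → ℕ} (hY : ∀ n, Measurable (Y n))
    (hle : ∀ᵐ ω ∂μ, ∀ n, Y n ω ≤ n) {v : ℝ}
    (hv : ∀ᵐ ω ∂μ, Tendsto (fun n => (Y n ω : ℝ) / n) atTop (nhds v)) :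
    Tendsto (fun n => (∫⁻ ω, (Y n ω : ℝ≥0∞) ∂μ) / n) atTop (nhds (ENNReal.ofReal v)) := by
  have hmeas : ∀ n, Measurable fun ω => (Y n ω : ℝ≥0∞) :=
    fun n => measurable_from_top.comp (hY n)
  have hbound : ∀ n, (fun ω => (Y n ω : ℝ≥0∞) / n) ≤ᵐ[μ] fun _ => 1 := fun n =>
    hle.mono fun ω hω => ENNReal.div_le_of_le_mul (by rw [one_mul]; exact_mod_cast hω n)
  have hlim : ∀ᵐ ω ∂μ, Tendsto (fun n => (Y n ω : ℝ≥0∞) / n) atTop (nhds (ENNReal.ofReal v)) :=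
    hv.mono fun ω hω => (ENNReal.tendsto_ofReal hω).congr' <|
      (eventually_gt_atTop 0).mono fun n hn => by
        rw [ENNReal.ofReal_div_of_pos (by exact_mod_cast hn), ENNReal.ofReal_natCast,
          ENNReal.ofReal_natCast]
  have := tendsto_lintegral_of_dominated_convergence _ (fun n => (hmeas n).div_const _) hbound
    (by simp) hlim
  rw [lintegral_const, measure_univ, mul_one] at this
  refine this.congr fun n => ?_
  simp only [div_eq_mul_inv, lintegral_mul_const _ (hmeas n)]

def children (ω : Env) (x : List ℕ+) : Finset (List ℕ+) :=
  (Finset.Icc 1 (ω x)).image (· :: x)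

lemma mem_children {ω : Env} {x y : List ℕ+} : y ∈ children ω x ↔ ∃ i ≤ ω x, y = i :: x := by
  simp [children, eq_comm]

lemma length_of_mem_children {ω : Env} {x y : List ℕ+} (hy : y ∈ children ω x) :
    y.length = x.length + 1 := by
  obtain ⟨i, -, rfl⟩ := mem_children.1 hy
  rfl

lemma card_children (ω : Env) (x : List ℕ+) : (children ω x).card = ω x := by
  rw [children, Finset.card_image_of_injective _ fun i j h => List.head_eq_of_cons_eq h,
    PNat.card_Icc]
  simp

def childMean (ω : Env) (f : List ℕ+ → ℝ≥0∞) (x : List ℕ+) : ℝ≥0∞ :=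
  ((ω x : ℕ) : ℝ≥0∞)⁻¹ * ∑ y ∈ children ω x, f y

section ChildMean

variable {ω ω₁ ω₂ : Env} {f f₁ f₂ : List ℕ+ → ℝ≥0∞} {x x₁ x₂ : List ℕ+} {V : ℝ≥0∞}

lemma childMean_le (h : ∀ y ∈ children ω x, f y ≤ V) : childMean ω f x ≤ V := by
  have hsum := Finset.sum_le_card_nsmul _ _ _ h
  rw [card_children, nsmul_eq_mul] at hsum
  calc childMean ω f x ≤ ((ω x : ℕ) : ℝ≥0∞)⁻¹ * (((ω x : ℕ) : ℝ≥0∞) * V) := by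
        rw [childMean]; gcongr
    _ = V := by
        rw [← mul_assoc, ENNReal.inv_mul_cancel (by simp) (natCast_ne_top _), one_mul]

lemma le_childMean (h : ∀ y ∈ children ω x, V ≤ f y) : V ≤ childMean ω f x := by
  have hsum := Finset.card_nsmul_le_sum _ _ _ h
  rw [card_children, nsmul_eq_mul] at hsum
  calc V = ((ω x : ℕ) : ℝ≥0∞)⁻¹ * (((ω x : ℕ) : ℝ≥0∞) * V) := by
        rw [← mul_assoc, ENNReal.inv_mul_cancel (by simp) (natCast_ne_top _), one_mul]
    _ ≤ childMean ω f x := by rw [childMean]; gcongr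

lemma childMean_le_childMean
    (h : ∀ y₂ ∈ children ω₂ x₂, ∀ y₁ ∈ children ω₁ x₁, f₂ y₂ ≤ f₁ y₁) :
    childMean ω₂ f₂ x₂ ≤ childMean ω₁ f₁ x₁ :=
  childMean_le fun y₂ hy₂ => le_childMean (h y₂ hy₂)

end ChildMean

def parentProb (β : ℝ) (ω : Env) (x : List ℕ+) : ℝ≥0∞ :=
  if x = [] then 0 else ENNReal.ofReal (1 / (1 + β * ((ω x : ℕ) : ℝ)))

def expectedDepth (β : ℝ) (ω : Env) : ℕ → List ℕ+ → ℝ≥0∞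
  | 0, x => x.length
  | n + 1, x =>
    mix (parentProb β ω x) (expectedDepth β ω n x.tail) (childMean ω (expectedDepth β ω n) x)

section ExpectedDepth

variable {β : ℝ} {ω ω₁ ω₂ : Env} {n : ℕ} {x x₁ x₂ : List ℕ+}

lemma parentProb_le_one (hβ : 0 ≤ β) : parentProb β ω x ≤ 1 := by
  unfold parentProb
  split_ifs
  · exact zero_le_one
  · exact ENNReal.ofReal_le_one.2 <|
      div_le_one_of_le₀ (le_add_of_nonneg_right (by positivity)) (by positivity)

lemma ne_nil_of_parentProb_ne_zero (h : parentProb β ω x ≠ 0) : x ≠ [] := by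
  rintro rfl
  simp [parentProb] at h

lemma parentProb_anti (hβ : 0 ≤ β) (hx₁ : x₁ ≠ []) (hx₂ : x₂ ≠ []) (h : ω₂ x₂ ≤ ω₁ x₁) :
    parentProb β ω₁ x₁ ≤ parentProb β ω₂ x₂ := by
  rw [parentProb, parentProb, if_neg hx₁, if_neg hx₂]
  gcongr
  exact_mod_cast h

lemma expectedDepth_succ_le (hβ : 0 ≤ β) {V : ℝ≥0∞}
    (htail : x ≠ [] → expectedDepth β ω n x.tail ≤ V)
    (hchild : ∀ y ∈ children ω x, expectedDepth β ω n y ≤ V) :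
    expectedDepth β ω (n + 1) x ≤ V :=
  mix_le (parentProb_le_one hβ) (fun h => htail (ne_nil_of_parentProb_ne_zero h))
    (childMean_le hchild)

lemma le_expectedDepth_succ (hβ : 0 ≤ β) {V : ℝ≥0∞}
    (htail : x ≠ [] → V ≤ expectedDepth β ω n x.tail)
    (hchild : ∀ y ∈ children ω x, V ≤ expectedDepth β ω n y) :
    V ≤ expectedDepth β ω (n + 1) x :=
  le_mix (parentProb_le_one hβ) (fun h => htail (ne_nil_of_parentProb_ne_zero h))
    (le_childMean hchild)

theorem expectedDepth_mono (hβ : 0 ≤ β) (H : ∀ v w, ω₂ w ≤ ω₁ v) :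
    ∀ n (x₁ x₂ : List ℕ+), x₂.length ≤ x₁.length → x₁.length % 2 = x₂.length % 2 →
      expectedDepth β ω₂ n x₂ ≤ expectedDepth β ω₁ n x₁
  | 0, x₁, x₂, hlen, _ => by simpa [expectedDepth] using hlen
  | n + 1, x₁, x₂, hlen, hpar => by
    have ih := expectedDepth_mono hβ H n
    have htail₁ : x₁.tail.length = x₁.length - 1 := List.length_tail
    have htail₂ : x₂.tail.length = x₂.length - 1 := List.length_tail
    by_cases hsame : x₂ ≠ [] ∧ x₁.length = x₂.length
    · obtain ⟨hx₂, hl⟩ := hsame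
      have hpos := List.length_pos_iff.2 hx₂
      have hx₁ : x₁ ≠ [] := List.length_pos_iff.1 (hl ▸ hpos)
      -- Both walks step to the parent or to a uniform child; the first one steps back less.
      refine mix_le_mix (parentProb_anti hβ hx₁ hx₂ (H _ _)) (parentProb_le_one hβ)
        (ih _ _ (by omega) (by omega)) (le_childMean fun y₁ hy₁ => ?_)
        (childMean_le_childMean fun y₂ hy₂ y₁ hy₁ => ?_)
      · have := length_of_mem_children hy₁
        exact ih _ _ (by omega) (by omega)
      · have := length_of_mem_children hy₁
        have := length_of_mem_children hy₂
        exact ih _ _ (by omega) (by omega)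
    · -- Otherwise `x₂` is two levels above `x₁`, or both are the root: after one step the
      -- walk from `x₂` is still weakly above every neighbour of `x₁`.
      have hsep : x₂.length + 2 ≤ x₁.length ∨ (x₁.length = 0 ∧ x₂.length = 0) := by
        by_cases hl : x₁.length = x₂.length
        · have hx₂ : x₂ = [] := by
            by_contra h
            exact hsame ⟨h, hl⟩
          exact Or.inr ⟨by simpa [hx₂] using hl, by simp [hx₂]⟩
        · omega
      have hneighbour : ∀ y₁ : List ℕ+, y₁.length + 1 = x₁.length ∨ y₁.length = x₁.length + 1 →
          expectedDepth β ω₂ (n + 1) x₂ ≤ expectedDepth β ω₁ n y₁ := by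
        intro y₁ hy₁
        refine expectedDepth_succ_le hβ (fun hx₂ => ?_) (fun y₂ hy₂ => ?_)
        · have := List.length_pos_iff.2 hx₂
          exact ih _ _ (by omega) (by omega)
        · have := length_of_mem_children hy₂
          exact ih _ _ (by omega) (by omega)
      refine le_expectedDepth_succ hβ (fun hx₁ => hneighbour _ (Or.inl ?_))
        (fun y₁ hy₁ => hneighbour _ (Or.inr (length_of_mem_children hy₁)))
      have := List.length_pos_iff.2 hx₁
      omega

end ExpectedDepth

section Step

variable {β : ℝ} {ω : Env} {x y : List ℕ+}

lemma step_nonneg (hβ : 0 ≤ β) (ω : Env) (x y : List ℕ+) : 0 ≤ step β ω x y := by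
  unfold step
  split_ifs <;> positivity

lemma step_congr {ω' : Env} (h : ω x = ω' x) (y : List ℕ+) : step β ω x y = step β ω' x y := by
  rw [step, step, h]

lemma tail_notMem_children : x.tail ∉ children ω x := fun h => by
  have := length_of_mem_children h
  rw [List.length_tail] at this
  omega

lemma ofReal_step_tail : ENNReal.ofReal (step β ω x x.tail) = parentProb β ω x := by
  rcases eq_or_ne x [] with rfl | hx
  · simp [step, parentProb]
  · rw [step, if_neg hx, if_pos rfl, parentProb, if_neg hx]

lemma ofReal_step_of_mem_children (hβ : 0 ≤ β) (hy : y ∈ children ω x) :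
    ENNReal.ofReal (step β ω x y) = (1 - parentProb β ω x) * ((ω x : ℕ) : ℝ≥0∞)⁻¹ := by
  have hk : (0 : ℝ) < (ω x : ℕ) := by exact_mod_cast (ω x).pos
  have hinv : ENNReal.ofReal (1 / ((ω x : ℕ) : ℝ)) = ((ω x : ℕ) : ℝ≥0∞)⁻¹ := by
    rw [one_div, ENNReal.ofReal_inv_of_pos hk, ENNReal.ofReal_natCast]
  rcases eq_or_ne x [] with rfl | hx
  · rw [step, if_pos rfl, if_pos (mem_children.1 hy), parentProb, if_pos rfl, tsub_zero,
      one_mul, hinv]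
  have hyt : y ≠ x.tail := fun h => tail_notMem_children (h ▸ hy)
  have hden : 0 < 1 + β * ((ω x : ℕ) : ℝ) := by positivity
  have hq : 1 / (1 + β * ((ω x : ℕ) : ℝ)) ≤ 1 :=
    div_le_one_of_le₀ (le_add_of_nonneg_right (by positivity)) hden.le
  have hsplit : β / (1 + β * ((ω x : ℕ) : ℝ))
      = (1 - 1 / (1 + β * ((ω x : ℕ) : ℝ))) * (1 / ((ω x : ℕ) : ℝ)) := by
    field_simp
    ring
  rw [step, if_neg hx, if_neg hyt, if_pos (mem_children.1 hy), parentProb, if_neg hx, hsplit,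
    ENNReal.ofReal_mul (sub_nonneg.2 hq), ENNReal.ofReal_sub _ (by positivity),
    ENNReal.ofReal_one, hinv]

lemma step_eq_zero (hy : y ≠ x.tail) (hy' : y ∉ children ω x) : step β ω x y = 0 := by
  rw [mem_children] at hy'
  unfold step
  split_ifs <;> tauto

lemma tsum_ofReal_step_mul (hβ : 0 ≤ β) (ω : Env) (x : List ℕ+) (G : List ℕ+ → ℝ≥0∞) :
    ∑' y, ENNReal.ofReal (step β ω x y) * G y
      = mix (parentProb β ω x) (G x.tail) (childMean ω G x) := by
  rw [tsum_eq_sum (s := insert x.tail (children ω x)) fun y hy => by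
      rw [Finset.mem_insert, not_or] at hy
      rw [step_eq_zero hy.1 hy.2, ENNReal.ofReal_zero, zero_mul],
    Finset.sum_insert tail_notMem_children, ofReal_step_tail, mix, childMean, Finset.mul_sum,
    Finset.mul_sum]
  congr 1
  refine Finset.sum_congr rfl fun y hy => ?_
  rw [ofReal_step_of_mem_children hβ hy, mul_assoc]

end Step

section Paths

variable {β : ℝ} {ω : Env} {n : ℕ}

def pathWeight (β : ℝ) (ω : Env) (n : ℕ) (x : Fin (n + 1) → List ℕ+) : ℝ≥0∞ :=
  ENNReal.ofReal (∏ i : Fin n, step β ω (x i.castSucc) (x i.succ))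

lemma pathWeight_cons (hβ : 0 ≤ β) (a : List ℕ+) (x : Fin (n + 1) → List ℕ+) :
    pathWeight β ω (n + 1) (Fin.cons a x)
      = ENNReal.ofReal (step β ω a (x 0)) * pathWeight β ω n x := by
  rw [pathWeight, Fin.prod_univ_succ, ENNReal.ofReal_mul (step_nonneg hβ _ _ _)]
  simp [pathWeight]

lemma pathWeight_congr {ω' : Env} {x : Fin (n + 1) → List ℕ+}
    (h : ∀ v ∈ Finset.univ.image x, ω v = ω' v) : pathWeight β ω n x = pathWeight β ω' n x := by
  rw [pathWeight, pathWeight, Finset.prod_congr rfl fun i _ =>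
    step_congr (h _ (Finset.mem_image_of_mem _ (Finset.mem_univ _))) _]

lemma measurable_pathWeight (x : Fin (n + 1) → List ℕ+) :
    Measurable fun ω : Env => pathWeight β ω n x :=
  ENNReal.measurable_ofReal.comp <| Finset.measurable_prod _ fun i _ =>
    (measurable_from_top (f := fun k : ℕ+ => step β (fun _ => k) (x i.castSucc) (x i.succ))).comp
      (measurable_pi_apply (x i.castSucc))

lemma length_le_of_step_ne_zero {x y : List ℕ+} (h : step β ω x y ≠ 0) :
    y.length ≤ x.length + 1 := by
  by_contra hlong
  refine h (step_eq_zero (fun hy => hlong ?_) (fun hy => hlong ?_))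
  · rw [hy, List.length_tail]
    omega
  · rw [length_of_mem_children hy]

lemma length_le_of_pathWeight_ne_zero {x : Fin (n + 1) → List ℕ+} (h : pathWeight β ω n x ≠ 0) :
    (x (Fin.last n)).length ≤ (x 0).length + n := by
  have hstep : ∀ i : Fin n, step β ω (x i.castSucc) (x i.succ) ≠ 0 := fun i hi =>
    h (by rw [pathWeight, Finset.prod_eq_zero (Finset.mem_univ i) hi, ENNReal.ofReal_zero])
  have key : ∀ i : Fin (n + 1), (x i).length ≤ (x 0).length + i := by
    refine Fin.induction (by simp) fun i hi => ?_
    have := length_le_of_step_ne_zero (hstep i)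
    simp only [Fin.val_castSucc, Fin.val_succ] at hi ⊢
    omega
  simpa using key (Fin.last n)

theorem expectedDepth_eq_tsum (hβ : 0 ≤ β) (ω : Env) : ∀ n y,
    expectedDepth β ω n y = ∑' w : Fin n → List ℕ+,
      (((Fin.cons y w : Fin (n + 1) → List ℕ+) (Fin.last n)).length : ℝ≥0∞)
        * pathWeight β ω n (Fin.cons y w)
  | 0, y => by simp [expectedDepth, pathWeight]
  | n + 1, y => by
    rw [tsum_fin_cons]
    simp_rw [pathWeight_cons hβ, Fin.cons_zero, ← Fin.succ_last, Fin.cons_succ,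
      mul_left_comm _ (ENNReal.ofReal _), ENNReal.tsum_mul_left, ← expectedDepth_eq_tsum hβ ω n,
      tsum_ofReal_step_mul hβ]
    rfl

end Paths

def trajectory (n : ℕ) (p : Env × (ℕ → List ℕ+)) : Fin (n + 1) → List ℕ+ := fun i => p.2 i

lemma measurable_trajectory (n : ℕ) : Measurable (trajectory n) :=
  measurable_pi_lambda _ fun _ => (measurable_pi_apply _).comp measurable_snd

def extendEnv (S : Finset (List ℕ+)) (g : S → ℕ+) : Env :=
  fun v => if h : v ∈ S then g ⟨v, h⟩ else 1

lemma extendEnv_restrict {S : Finset (List ℕ+)} (ω : Env) {v : List ℕ+} (hv : v ∈ S) :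
    extendEnv S (S.restrict ω) v = ω v :=
  dif_pos hv

lemma preimage_restrict_singleton (S : Finset (List ℕ+)) (g : S → ℕ+) :
    (fun p : Env × (ℕ → List ℕ+) => S.restrict p.1) ⁻¹' {g}
      = {p | ∀ v ∈ S, p.1 v = extendEnv S g v} := by
  ext p
  simp only [Set.mem_preimage, Set.mem_singleton_iff, funext_iff,
    Subtype.forall, Finset.restrict, extendEnv]
  exact forall₂_congr fun v hv => by rw [dif_pos hv]

namespace IsAnnealedLaw

variable {β : ℝ} {P : Measure ℕ+} {μ : Measure (Env × (ℕ → List ℕ+))}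

lemma ae_root (hμ : IsAnnealedLaw β P μ) : ∀ᵐ p ∂μ, p.2 0 = [] := by
  have := hμ.1
  have hm : MeasurableSet {p : Env × (ℕ → List ℕ+) | p.2 0 = []} :=
    (show Measurable fun p : Env × (ℕ → List ℕ+) => p.2 0 from
      (measurable_pi_apply 0).comp measurable_snd) (measurableSet_singleton [])
  rw [ae_iff_measure_eq hm.nullMeasurableSet, hμ.2.1, measure_univ]

lemma measure_trajectory_of_ne_nil (hμ : IsAnnealedLaw β P μ) {n : ℕ}
    {x : Fin (n + 1) → List ℕ+} (hx : x 0 ≠ []) : μ (trajectory n ⁻¹' {x}) = 0 :=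
  measure_mono_null (fun p (hp : trajectory n p = x) (h0 : p.2 0 = []) => hx (hp ▸ h0))
    (ae_iff.1 hμ.ae_root)

lemma measure_cylinder (hμ : IsAnnealedLaw β P μ) {n : ℕ} {x : Fin (n + 1) → List ℕ+}
    (hx : x 0 = []) {S : Finset (List ℕ+)} (hS : ∀ i : Fin n, x i.castSucc ∈ S) (f : Env) :
    μ ({p | ∀ v ∈ S, p.1 v = f v} ∩ trajectory n ⁻¹' {x})
      = ENNReal.ofReal (∏ v ∈ S, (P {f v}).toReal) * pathWeight β f n x := by
  have := hμ.1
  have hval : ∀ i : ℕ, i < n + 1 → (Fin.ofNat (n + 1) i : ℕ) = i := fun i hi => by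
    rw [Fin.val_ofNat, Nat.mod_eq_of_lt hi]
  have hset : {p : Env × (ℕ → List ℕ+) |
        (∀ v ∈ S, p.1 v = f v) ∧ ∀ i ≤ n, p.2 i = x (Fin.ofNat (n + 1) i)}
      = {p | ∀ v ∈ S, p.1 v = f v} ∩ trajectory n ⁻¹' {x} := by
    ext p
    simp only [Set.mem_ofPred_eq, Set.mem_inter_iff, Set.mem_preimage, Set.mem_singleton_iff,
      funext_iff, trajectory]
    refine and_congr_right fun _ => ⟨fun h i => ?_, fun h i hi => ?_⟩
    · simpa [Fin.ext_iff, hval i i.2] using h i (Nat.lt_succ_iff.1 i.2)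
    · simpa only [hval i (Nat.lt_succ_of_le hi)] using h (Fin.ofNat (n + 1) i)
  have hprod :
      ∏ i ∈ Finset.range n, step β f (x (Fin.ofNat (n + 1) i)) (x (Fin.ofNat (n + 1) (i + 1)))
      = ∏ i : Fin n, step β f (x i.castSucc) (x i.succ) := by
    rw [← Fin.prod_univ_eq_prod_range]
    refine Finset.prod_congr rfl fun i _ => ?_
    congr 2 <;> ext <;> simp [Nat.succ_lt_succ i.2]
  have := hμ.2.2 n (fun i => x (Fin.ofNat (n + 1) i)) S f (by simpa using hx) fun i hi => by
    simpa only [show Fin.ofNat (n + 1) i = Fin.castSucc ⟨i, hi⟩ from Fin.ext (hval i (by omega))]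
      using hS ⟨i, hi⟩
  rw [hset, hprod] at this
  rw [← ENNReal.ofReal_toReal (measure_ne_top μ _), this,
    ENNReal.ofReal_mul (Finset.prod_nonneg fun _ _ => ENNReal.toReal_nonneg), pathWeight]

lemma measure_envCylinder (hμ : IsAnnealedLaw β P μ) (S : Finset (List ℕ+)) (f : Env) :
    μ {p | ∀ v ∈ S, p.1 v = f v} = ENNReal.ofReal (∏ v ∈ S, (P {f v}).toReal) := by
  have hroot : μ (trajectory 0 ⁻¹' {fun _ => []})ᶜ = 0 :=
    measure_mono_null (fun p (hp : p ∉ trajectory 0 ⁻¹' {fun _ => []}) (h0 : p.2 0 = []) =>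
      hp (funext fun i => by rw [Fin.fin_one_eq_zero i]; exact h0)) (ae_iff.1 hμ.ae_root)
  simpa [measure_inter_conull hroot, pathWeight] using
    hμ.measure_cylinder (x := fun _ => []) rfl (fun i => i.elim0) f

lemma measure_trajectory_preimage (hμ : IsAnnealedLaw β P μ) {n : ℕ} {x : Fin (n + 1) → List ℕ+}
    (hx : x 0 = []) : μ (trajectory n ⁻¹' {x}) = ∫⁻ p, pathWeight β p.1 n x ∂μ := by
  set S := Finset.univ.image x
  have hr : Measurable fun p : Env × (ℕ → List ℕ+) => S.restrict p.1 :=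
    (Finset.measurable_restrict S).comp measurable_fst
  have hfactor : ∀ p : Env × (ℕ → List ℕ+),
      pathWeight β p.1 n x = pathWeight β (extendEnv S (S.restrict p.1)) n x := fun p =>
    pathWeight_congr fun v hv => (extendEnv_restrict p.1 hv).symm
  rw [measure_eq_tsum_inter_preimage hr, lintegral_congr hfactor,
    lintegral_comp_eq_tsum hr fun g => pathWeight β (extendEnv S g) n x]
  refine tsum_congr fun g => ?_
  rw [preimage_restrict_singleton, Set.inter_comm,
    hμ.measure_cylinder hx (fun i => Finset.mem_image_of_mem _ (Finset.mem_univ _)),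
    hμ.measure_envCylinder, mul_comm]

/-- The inner sum is the quenched expectation of `h (X₀, …, Xₙ)` in the environment `p.1`. -/
theorem lintegral_comp_trajectory (hμ : IsAnnealedLaw β P μ) (n : ℕ)
    (h : (Fin (n + 1) → List ℕ+) → ℝ≥0∞) :
    ∫⁻ p, h (trajectory n p) ∂μ = ∫⁻ p, ∑' w : Fin n → List ℕ+,
      h (Fin.cons [] w) * pathWeight β p.1 n (Fin.cons [] w) ∂μ := by
  have hmeas : ∀ x, Measurable fun p : Env × (ℕ → List ℕ+) => pathWeight β p.1 n x :=
    fun x => (measurable_pathWeight x).comp measurable_fst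
  rw [lintegral_comp_eq_tsum (measurable_trajectory n), tsum_fin_cons,
    tsum_eq_single [] fun a ha => ENNReal.tsum_eq_zero.2 fun w => by
      rw [hμ.measure_trajectory_of_ne_nil (by simpa using ha), mul_zero],
    lintegral_tsum fun w => ((hmeas _).const_mul _).aemeasurable]
  refine tsum_congr fun w => ?_
  rw [hμ.measure_trajectory_preimage (by simp), lintegral_const_mul _ (hmeas _)]

lemma lintegral_length (hμ : IsAnnealedLaw β P μ) (hβ : 0 ≤ β) (n : ℕ) :
    ∫⁻ p, ((p.2 n).length : ℝ≥0∞) ∂μ = ∫⁻ p, expectedDepth β p.1 n [] ∂μ := by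
  simp_rw [expectedDepth_eq_tsum hβ]
  exact hμ.lintegral_comp_trajectory n fun x => ((x (Fin.last n)).length : ℝ≥0∞)

lemma ae_length_le (hμ : IsAnnealedLaw β P μ) : ∀ᵐ p ∂μ, ∀ n, (p.2 n).length ≤ n := by
  refine ae_all_iff.2 fun n => ?_
  have h := hμ.lintegral_comp_trajectory n fun x => if n < (x (Fin.last n)).length then 1 else 0
  have hzero : ∀ p : Env × (ℕ → List ℕ+), ∑' w : Fin n → List ℕ+,
      (if n < ((Fin.cons [] w : Fin (n + 1) → List ℕ+) (Fin.last n)).length then 1 else 0)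
        * pathWeight β p.1 n (Fin.cons [] w) = 0 := fun p =>
    ENNReal.tsum_eq_zero.2 fun w => by
      split_ifs with hlong
      · rw [one_mul]
        by_contra hw
        have := length_le_of_pathWeight_ne_zero hw
        simp only [Fin.cons_zero, List.length_nil, zero_add] at this
        omega
      · rw [zero_mul]
  have hmeas : Measurable fun p =>
      if n < (trajectory n p (Fin.last n)).length then (1 : ℝ≥0∞) else 0 :=
    (measurable_of_countable fun x : Fin (n + 1) → List ℕ+ =>
      if n < (x (Fin.last n)).length then (1 : ℝ≥0∞) else 0).comp (measurable_trajectory n)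
  rw [lintegral_congr hzero, lintegral_zero, lintegral_eq_zero_iff hmeas] at h
  filter_upwards [h] with p hp
  by_contra hlong
  simp [trajectory, lt_of_not_ge hlong] at hp

lemma ae_support (hμ : IsAnnealedLaw β P μ) : ∀ᵐ p ∂μ, ∀ v, P {p.1 v} ≠ 0 := by
  refine ae_all_iff.2 fun v => ae_iff.2 ?_
  have hcover : {p : Env × (ℕ → List ℕ+) | ¬P {p.1 v} ≠ 0}
      = ⋃ (a : ℕ+) (_ : P {a} = 0), {p | ∀ u ∈ ({v} : Finset (List ℕ+)), p.1 u = a} := by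
    ext p
    simp
  rw [hcover]
  exact measure_iUnion_null fun a => measure_iUnion_null fun ha =>
    (hμ.measure_envCylinder {v} fun _ => a).trans (by simp [ha])

lemma lintegral_length_le (hμ : IsAnnealedLaw β P μ) (hβ : 0 ≤ β) {ω₀ : Env}
    (h : ∀ a, P {a} ≠ 0 → ∀ v, a ≤ ω₀ v) (n : ℕ) :
    ∫⁻ p, ((p.2 n).length : ℝ≥0∞) ∂μ ≤ expectedDepth β ω₀ n [] := by
  have := hμ.1
  rw [hμ.lintegral_length hβ]
  calc ∫⁻ p, expectedDepth β p.1 n [] ∂μ ≤ ∫⁻ _, expectedDepth β ω₀ n [] ∂μ :=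
        lintegral_mono_ae <| hμ.ae_support.mono fun p hp =>
          expectedDepth_mono hβ (fun v w => h _ (hp w) v) n _ _ le_rfl rfl
    _ = expectedDepth β ω₀ n [] := by simp

lemma le_lintegral_length (hμ : IsAnnealedLaw β P μ) (hβ : 0 ≤ β) {ω₀ : Env}
    (h : ∀ a, P {a} ≠ 0 → ∀ v, ω₀ v ≤ a) (n : ℕ) :
    expectedDepth β ω₀ n [] ≤ ∫⁻ p, ((p.2 n).length : ℝ≥0∞) ∂μ := by
  have := hμ.1
  rw [hμ.lintegral_length hβ]
  calc expectedDepth β ω₀ n [] = ∫⁻ _, expectedDepth β ω₀ n [] ∂μ := by simp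
    _ ≤ ∫⁻ p, expectedDepth β p.1 n [] ∂μ :=
        lintegral_mono_ae <| hμ.ae_support.mono fun p hp =>
          expectedDepth_mono hβ (fun v w => h _ (hp v) w) n _ _ le_rfl rfl

lemma tendsto_lintegral_length_div (hμ : IsAnnealedLaw β P μ) {v : ℝ}
    (hv : ∀ᵐ p ∂μ, Tendsto (fun n : ℕ => ((p.2 n).length : ℝ) / n) atTop (nhds v)) :
    Tendsto (fun n : ℕ => (∫⁻ p, ((p.2 n).length : ℝ≥0∞) ∂μ) / n) atTop
      (nhds (ENNReal.ofReal v)) :=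
  have := hμ.1
  have hY : ∀ n, Measurable fun p : Env × (ℕ → List ℕ+) => (p.2 n).length := fun n =>
    measurable_from_top.comp ((measurable_pi_apply n).comp measurable_snd)
  tendsto_lintegral_div_of_ae_tendsto hY hμ.ae_length_le hv

end IsAnnealedLaw

end GWSpeed

open GWSpeed

theorem speed_monotone_separated_supports_general (P₁ P₂ : Measure ℕ+)
    (hsupp : ∀ a b : ℕ+, P₂ {a} ≠ 0 → P₁ {b} ≠ 0 → a ≤ b) :
    ∀ β : ℝ, 0 < β →
      ∀ v₁ v₂ : ℝ, HasSpeed β P₁ v₁ → HasSpeed β P₂ v₂ → v₂ ≤ v₁ := by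
  rintro β hβ v₁ v₂ ⟨μ₁, hμ₁, hv₁⟩ ⟨μ₂, hμ₂, hv₂⟩
  have := hμ₁.1
  obtain ⟨p, hp⟩ := hμ₁.ae_support.exists
  obtain ⟨k, hk, hk_min⟩ := wellFounded_lt.has_min {a : ℕ+ | P₁ {a} ≠ 0} ⟨_, hp []⟩
  have hE : ∀ n, ∫⁻ p, ((p.2 n).length : ℝ≥0∞) ∂μ₂ ≤ ∫⁻ p, ((p.2 n).length : ℝ≥0∞) ∂μ₁ :=
    fun n => calc
      _ ≤ expectedDepth β (fun _ => k) n [] :=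
        hμ₂.lintegral_length_le hβ.le (fun a ha _ => hsupp a k ha hk) n
      _ ≤ _ := hμ₁.le_lintegral_length hβ.le (fun b hb _ => not_lt.1 (hk_min b hb)) n
  have hv₁_nonneg : 0 ≤ v₁ := by
    obtain ⟨p, hp⟩ := hv₁.exists
    exact ge_of_tendsto' hp fun n => by positivity
  refine (ENNReal.ofReal_le_ofReal_iff hv₁_nonneg).1 <|
    le_of_tendsto_of_tendsto' (hμ₂.tendsto_lintegral_length_div hv₂)
      (hμ₁.tendsto_lintegral_length_div hv₁) fun n => ?_
  exact ENNReal.div_le_div_right (hE n) _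

/-- If every point of the support of `P₂` is at most every point of the support of `P₁`
(and `P₁ ≠ P₂`), then `v(β, P₁) ≥ v(β, P₂)` for every `β > 0`. -/
theorem speed_monotone_separated_supports (P₁ P₂ : Measure ℕ+)
    [IsProbabilityMeasure P₁] [IsProbabilityMeasure P₂]
    (hne : P₁ ≠ P₂)
    (hsupp : ∀ a b : ℕ+, P₂ {a} ≠ 0 → P₁ {b} ≠ 0 → a ≤ b) :
    ∀ β : ℝ, 0 < β →
      ∀ v₁ v₂ : ℝ, HasSpeed β P₁ v₁ → HasSpeed β P₂ v₂ → v₂ ≤ v₁ :=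
  speed_monotone_separated_supports_general P₁ P₂ hsupp
end
end

section
/- Let β > 1 be a real number and let Z₁ ≥ Z₂ ≥ 1 be positive integers. Define η₃ = (1/(β+1) − 1/(Z₂β+1))·(1/Z₂) and η₄ = (1/(β+1) − 1/(Z₁β+1))·(1/Z₁). Then Z₂·max(η₃ − η₄, 0) ≤ (1/(β+1))·(1 − Z₂/Z₁). In particular, (1/(β+1) − 1/(Z₂β+1)) − (1/(β+1) − 1/(Z₁β+1))·(Z₂/Z₁) ≤ (1/(β+1))·(1 − Z₂/Z₁). -/
/-!
Write `a = Z₂ ≤ b = Z₁` and `c = 1/(β+1)`. The `c`-terms cancel, so the second inequality says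
`a / b / (bβ + 1) ≤ 1 / (aβ + 1)`, i.e. `a (aβ + 1) ≤ b (bβ + 1)`, which is monotonicity of
`x ↦ x (xβ + 1)` for `β ≥ 0`. Multiplying `η₃ - η₄` by `a` gives exactly the left side of the
second inequality, and its right side is nonnegative, so the positive part obeys the same bound.
-/

section
variable {β a b : ℝ}

lemma div_div_mul_add_one_le_one_div (hβ : 0 ≤ β) (ha : 0 < a) (hab : a ≤ b) :
    a / b / (b * β + 1) ≤ 1 / (a * β + 1) := by
  have hb : 0 < b := ha.trans_le hab
  calc a / b / (b * β + 1) = a / (b * (b * β + 1)) := div_div a _ _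
    _ ≤ a / (a * (a * β + 1)) := by gcongr
    _ = 1 / (a * β + 1) := by field_simp

lemma sub_sub_mul_div_le (hβ : 0 ≤ β) (ha : 0 < a) (hab : a ≤ b) (c : ℝ) :
    (c - 1 / (a * β + 1)) - (c - 1 / (b * β + 1)) * (a / b) ≤ c * (1 - a / b) := by
  have hcancel : (c - 1 / (a * β + 1)) - (c - 1 / (b * β + 1)) * (a / b)
      = c * (1 - a / b) - (1 / (a * β + 1) - a / b / (b * β + 1)) := by ring
  linarith [div_div_mul_add_one_le_one_div hβ ha hab]

lemma mul_max_sub_div_sub_div_le (hβ : 0 ≤ β) (ha : 0 < a) (hab : a ≤ b) {c : ℝ} (hc : 0 ≤ c) :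
    a * max ((c - 1 / (a * β + 1)) * (1 / a) - (c - 1 / (b * β + 1)) * (1 / b)) 0
      ≤ c * (1 - a / b) := by
  have hb : 0 < b := ha.trans_le hab
  rw [mul_max_of_nonneg _ _ ha.le, mul_zero]
  refine max_le ((sub_sub_mul_div_le hβ ha hab c).trans_eq' ?_)
    (mul_nonneg hc (sub_nonneg.2 (div_le_one_of_le₀ hab hb.le)))
  field_simp

end

/-- Deterministic inequality for the coupling overlap defect: for `β > 1` and positive
integers `Z₁ ≥ Z₂ ≥ 1`, with `η₃ = (1/(β+1) − 1/(Z₂β+1))/Z₂` and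
`η₄ = (1/(β+1) − 1/(Z₁β+1))/Z₁`, one has `Z₂·[η₃ − η₄]₊ ≤ (1/(β+1))·(1 − Z₂/Z₁)`; in
particular `(1/(β+1) − 1/(Z₂β+1)) − (1/(β+1) − 1/(Z₁β+1))·(Z₂/Z₁) ≤ (1/(β+1))·(1 − Z₂/Z₁)`. -/
theorem coupling_defect_bound (β : ℝ) (hβ : 1 < β) (Z₁ Z₂ : ℕ+) (h : Z₂ ≤ Z₁) :
    ((Z₂ : ℕ) : ℝ) *
        max ((1 / (β + 1) - 1 / (((Z₂ : ℕ) : ℝ) * β + 1)) * (1 / ((Z₂ : ℕ) : ℝ))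
             - (1 / (β + 1) - 1 / (((Z₁ : ℕ) : ℝ) * β + 1)) * (1 / ((Z₁ : ℕ) : ℝ))) 0
      ≤ (1 / (β + 1)) * (1 - ((Z₂ : ℕ) : ℝ) / ((Z₁ : ℕ) : ℝ)) ∧
    (1 / (β + 1) - 1 / (((Z₂ : ℕ) : ℝ) * β + 1))
        - (1 / (β + 1) - 1 / (((Z₁ : ℕ) : ℝ) * β + 1)) * (((Z₂ : ℕ) : ℝ) / ((Z₁ : ℕ) : ℝ))
      ≤ (1 / (β + 1)) * (1 - ((Z₂ : ℕ) : ℝ) / ((Z₁ : ℕ) : ℝ)) := by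
  have hβ₀ : 0 ≤ β := by linarith
  have hZ₂ : (0 : ℝ) < (Z₂ : ℕ) := by positivity
  have hZ : ((Z₂ : ℕ) : ℝ) ≤ (Z₁ : ℕ) := by exact_mod_cast h
  exact ⟨mul_max_sub_div_sub_div_le hβ₀ hZ₂ hZ (by positivity),
    sub_sub_mul_div_le hβ₀ hZ₂ hZ _⟩
end

section
/- Let (Ω, F, P) be a probability space, let W ≥ 0 be a random variable and (Z_k)_{k≥1} a sequence of nonnegative random variables. Let m₁ > m₃ > m₂ > 1 be real numbers and suppose there exist constants α, D, C₁, C₂ > 0 such that: (a) P(W ≤ ε) ≤ D·ε^α for all ε ∈ (0, 1]; (b) P(|Z_k/m₁^k − W| ≥ ε) ≤ C₁·exp(−C₂·ε^{2/3}·m₁^{k/3}) for all k ≥ 1 and all ε > 0; (c) m₁ > m₂^{1/α}·m₃ and m₁ > m₂^{2/α}. Then m₂^k · P(Z_k ≤ m₃^k) → 0 as k → ∞. -/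
open MeasureTheory Filter

/-! Pick `θ` with `max (m₃/m₁) (m₁^(-1/2)) < θ < m₂^(-1/α)`, which (c) makes possible. On
`{Z_k ≤ m₃^k}` we have `Z_k/m₁^k ≤ θ^k`, so either `W ≤ 2θ^k` or `|Z_k/m₁^k - W| ≥ θ^k`. By (a)
and (b), `m₂^k P(Z_k ≤ m₃^k) ≤ D 2^α (m₂ θ^α)^k + C₁ m₂^k exp(-C₂ (θ² m₁)^(k/3))`. The first
term decays geometrically since `m₂ θ^α < 1`; in the second, `θ² m₁ > 1` makes the exponent grow
geometrically, which beats any geometric factor `m₂^k`. -/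

theorem tendsto_pow_mul_exp_neg_mul_pow {M c r : ℝ} (hM : 0 ≤ M) (hc : 0 < c) (hr : 1 < r) :
    Tendsto (fun k : ℕ => M ^ k * Real.exp (-(c * r ^ k))) atTop (nhds 0) := by
  obtain ⟨n, hn⟩ := pow_unbounded_of_one_lt M hr
  have hrn : 0 < r ^ n := by positivity
  have hbound (k : ℕ) :
      M ^ k * Real.exp (-(c * r ^ k)) ≤ n.factorial / c ^ n * (M / r ^ n) ^ k := by
    have hx : 0 < c * r ^ k := by positivity
    have hexp : Real.exp (-(c * r ^ k)) ≤ n.factorial / (c * r ^ k) ^ n := by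
      rw [Real.exp_neg, ← inv_div]
      exact inv_anti₀ (by positivity) (Real.pow_div_factorial_le_exp _ hx.le n)
    calc M ^ k * Real.exp (-(c * r ^ k)) ≤ M ^ k * (n.factorial / (c * r ^ k) ^ n) := by gcongr
      _ = n.factorial / c ^ n * (M / r ^ n) ^ k := by
        rw [mul_pow, div_pow, pow_right_comm r k n]; field_simp
  have hgeom : Tendsto (fun k : ℕ => n.factorial / c ^ n * (M / r ^ n) ^ k) atTop (nhds 0) := by
    simpa using (tendsto_pow_atTop_nhds_zero_of_lt_one (by positivity)
      ((div_lt_one hrn).2 hn)).const_mul (n.factorial / c ^ n : ℝ)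
  exact squeeze_zero (fun k => by positivity) hbound hgeom

theorem exists_pos_div_le_mul_lt_one_one_lt_sq_mul {β m₁ m₃ : ℝ} (hβ : 0 < β)
    (h₁ : β * m₃ < m₁) (h₂ : β ^ 2 < m₁) :
    ∃ θ : ℝ, 0 < θ ∧ m₃ / m₁ ≤ θ ∧ β * θ < 1 ∧ 1 < θ ^ 2 * m₁ := by
  have hm₁ : 0 < m₁ := (by positivity : (0:ℝ) < β ^ 2).trans h₂
  have hsqrt : β < √m₁ := Real.lt_sqrt hβ.le |>.2 h₂
  have hsqrt₀ : 0 < √m₁ := hβ.trans hsqrt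
  obtain ⟨θ, hθlo, hθhi⟩ : ∃ θ, max (m₃ / m₁) (√m₁)⁻¹ < θ ∧ θ < β⁻¹ := by
    refine exists_between (max_lt ?_ (inv_strictAnti₀ hβ hsqrt))
    rw [div_lt_iff₀ hm₁, ← div_eq_inv_mul, lt_div_iff₀' hβ]
    exact h₁
  have hθsqrt : (√m₁)⁻¹ < θ := (le_max_right _ _).trans_lt hθlo
  have hθ : 0 < θ := (inv_pos.2 hsqrt₀).trans hθsqrt
  refine ⟨θ, hθ, (le_max_left _ _).trans hθlo.le, ?_, ?_⟩
  · simpa [hβ.ne'] using mul_lt_mul_of_pos_left hθhi hβ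
  · have := pow_lt_pow_left₀ hθsqrt (by positivity) two_ne_zero
    rw [inv_pow, Real.sq_sqrt hm₁.le, inv_lt_iff_one_lt_mul₀ hm₁] at this
    linarith

theorem exists_decay_threshold {m₁ m₂ m₃ α : ℝ} (h2 : 1 < m₂) (hα : 0 < α)
    (hgap₁ : m₂ ^ ((1 : ℝ) / α) * m₃ < m₁) (hgap₂ : m₂ ^ ((2 : ℝ) / α) < m₁) :
    ∃ θ : ℝ, 0 < θ ∧ θ < 1 ∧ m₃ / m₁ ≤ θ ∧ m₂ * θ ^ α < 1 ∧ 1 < θ ^ 2 * m₁ := by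
  have hm₂ : 0 < m₂ := one_pos.trans h2
  set β := m₂ ^ ((1 : ℝ) / α) with hβ_def
  have hβ : 1 < β := Real.one_lt_rpow h2 (by positivity)
  have hβα : β ^ α = m₂ := by rw [hβ_def, one_div, Real.rpow_inv_rpow hm₂.le hα.ne']
  have hβsq : β ^ 2 = m₂ ^ ((2 : ℝ) / α) := by
    rw [hβ_def, ← Real.rpow_natCast, ← Real.rpow_mul hm₂.le]; ring_nf
  obtain ⟨θ, hθ, hθ₃, hβθ, hθm₁⟩ :=
    exists_pos_div_le_mul_lt_one_one_lt_sq_mul (one_pos.trans hβ) hgap₁ (hβsq ▸ hgap₂)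
  refine ⟨θ, hθ, (le_mul_of_one_le_left hθ.le hβ.le).trans_lt hβθ, hθ₃, ?_, hθm₁⟩
  rw [← hβα, ← Real.mul_rpow (by positivity) hθ.le]
  exact Real.rpow_lt_one (by positivity) hβθ hα

theorem rpow_two_div_three_mul_rpow_div_three {x m : ℝ} (hx : 0 ≤ x) (hm : 0 ≤ m) (k : ℕ) :
    (x ^ k) ^ ((2 : ℝ) / 3) * m ^ ((k : ℝ) / 3) = ((x ^ 2 * m) ^ ((1 : ℝ) / 3)) ^ k := by
  rw [show (2 : ℝ) / 3 = (2 : ℕ) * (1 / 3) by norm_num, show (k : ℝ) / 3 = k * (1 / 3) by ring,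
    Real.rpow_natCast_mul (by positivity), Real.rpow_natCast_mul hm,
    ← Real.mul_rpow (by positivity) (by positivity), Real.rpow_pow_comm (by positivity)]
  ring_nf

theorem measureReal_le_le_add_measureReal_le_abs_sub {Ω : Type*} [MeasurableSpace Ω]
    (μ : Measure Ω) [IsFiniteMeasure μ] (X Y : Ω → ℝ) (s t : ℝ) :
    μ.real {ω | X ω ≤ s} ≤ μ.real {ω | Y ω ≤ s + t} + μ.real {ω | t ≤ |X ω - Y ω|} := by
  refine (measureReal_mono fun ω (hX : X ω ≤ s) => ?_).trans (measureReal_union_le _ _)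
  by_cases hY : Y ω ≤ s + t
  · exact Or.inl hY
  · refine Or.inr (show t ≤ |X ω - Y ω| from ?_)
    rw [abs_sub_comm]
    exact (le_abs_self _).trans' (by linarith [not_le.1 hY])

theorem measureReal_le_pow_le_of_tail_of_concentration {Ω : Type*} [MeasurableSpace Ω]
    (μ : Measure Ω) [IsFiniteMeasure μ] {W Y : Ω → ℝ} {m₁ m₃ θ α D C₁ C₂ : ℝ} {k : ℕ}
    (hm₁ : 0 < m₁) (hm₃ : 0 ≤ m₃) (hθ : 0 < θ) (hθ₃ : m₃ / m₁ ≤ θ) (hθk : 2 * θ ^ k ≤ 1)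
    (htail : ∀ ε : ℝ, 0 < ε → ε ≤ 1 → μ.real {ω | W ω ≤ ε} ≤ D * ε ^ α)
    (hconc : ∀ ε : ℝ, 0 < ε → μ.real {ω | ε ≤ |Y ω / m₁ ^ k - W ω|}
        ≤ C₁ * Real.exp (-C₂ * ε ^ ((2 : ℝ) / 3) * m₁ ^ ((k : ℝ) / 3))) :
    μ.real {ω | Y ω ≤ m₃ ^ k}
      ≤ D * 2 ^ α * (θ ^ α) ^ k + C₁ * Real.exp (-(C₂ * ((θ ^ 2 * m₁) ^ ((1 : ℝ) / 3)) ^ k)) := by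
  have hθk₀ : 0 < θ ^ k := by positivity
  have hsub : {ω | Y ω ≤ m₃ ^ k} ⊆ {ω | Y ω / m₁ ^ k ≤ θ ^ k} := fun ω (hω : Y ω ≤ m₃ ^ k) =>
    calc Y ω / m₁ ^ k ≤ (m₃ / m₁) ^ k := by rw [div_pow]; gcongr
      _ ≤ θ ^ k := by gcongr
  calc μ.real {ω | Y ω ≤ m₃ ^ k}
      ≤ μ.real {ω | W ω ≤ 2 * θ ^ k} + μ.real {ω | θ ^ k ≤ |Y ω / m₁ ^ k - W ω|} := by
        rw [two_mul]
        exact (measureReal_mono hsub).trans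
          (measureReal_le_le_add_measureReal_le_abs_sub μ _ W _ _)
    _ ≤ D * (2 * θ ^ k) ^ α
        + C₁ * Real.exp (-C₂ * (θ ^ k) ^ ((2 : ℝ) / 3) * m₁ ^ ((k : ℝ) / 3)) :=
        add_le_add (htail _ (by positivity) hθk) (hconc _ hθk₀)
    _ = _ := by
        rw [Real.mul_rpow zero_le_two hθk₀.le, ← Real.rpow_pow_comm hθ.le, mul_assoc _ (_ ^ _),
          rpow_two_div_three_mul_rpow_div_three hθ.le hm₁.le, neg_mul, mul_assoc]

theorem small_generation_prob_decay_general {Ω : Type*} [MeasurableSpace Ω]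
    (μ : Measure Ω) [IsProbabilityMeasure μ]
    (W : Ω → ℝ) (Z : ℕ → Ω → ℝ) (m₁ m₂ m₃ : ℝ) (h2 : 1 < m₂) (h32 : m₂ < m₃)
    (α D C₁ C₂ : ℝ) (hα : 0 < α) (hC₂ : 0 < C₂)
    (htail : ∀ ε : ℝ, 0 < ε → ε ≤ 1 → (μ {ω | W ω ≤ ε}).toReal ≤ D * ε ^ α)
    (hconc : ∀ k : ℕ, 1 ≤ k → ∀ ε : ℝ, 0 < ε →
      (μ {ω | ε ≤ |Z k ω / m₁ ^ k - W ω|}).toReal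
        ≤ C₁ * Real.exp (-C₂ * ε ^ ((2 : ℝ) / 3) * m₁ ^ ((k : ℝ) / 3)))
    (hgap₁ : m₂ ^ ((1 : ℝ) / α) * m₃ < m₁) (hgap₂ : m₂ ^ ((2 : ℝ) / α) < m₁) :
    Tendsto (fun k : ℕ => m₂ ^ k * (μ {ω | Z k ω ≤ m₃ ^ k}).toReal) atTop (nhds 0) := by
  have hm₂ : 0 < m₂ := one_pos.trans h2
  have hm₁ : 0 < m₁ := (Real.rpow_pos_of_pos hm₂ _).trans hgap₂
  obtain ⟨θ, hθ, hθ_lt_one, hθ₃, hq, hθm₁⟩ := exists_decay_threshold h2 hα hgap₁ hgap₂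
  have hr : 1 < (θ ^ 2 * m₁) ^ ((1 : ℝ) / 3) := Real.one_lt_rpow hθm₁ (by norm_num)
  have hsmall : ∀ᶠ k : ℕ in atTop, 2 * θ ^ k ≤ 1 := by
    simpa using ((tendsto_pow_atTop_nhds_zero_of_lt_one hθ.le hθ_lt_one).const_mul 2).eventually
      (ge_mem_nhds (by norm_num : 2 * (0 : ℝ) < 1))
  have hbound : ∀ᶠ k : ℕ in atTop, m₂ ^ k * (μ {ω | Z k ω ≤ m₃ ^ k}).toReal
      ≤ D * 2 ^ α * (m₂ * θ ^ α) ^ k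
        + C₁ * (m₂ ^ k * Real.exp (-(C₂ * ((θ ^ 2 * m₁) ^ ((1 : ℝ) / 3)) ^ k))) := by
    filter_upwards [hsmall, eventually_ge_atTop 1] with k hk hk1
    calc m₂ ^ k * (μ {ω | Z k ω ≤ m₃ ^ k}).toReal
        ≤ m₂ ^ k * (D * 2 ^ α * (θ ^ α) ^ k
          + C₁ * Real.exp (-(C₂ * ((θ ^ 2 * m₁) ^ ((1 : ℝ) / 3)) ^ k))) := by
          gcongr
          exact measureReal_le_pow_le_of_tail_of_concentration μ hm₁ (hm₂.trans h32).le hθ hθ₃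
            hk htail (hconc k hk1)
      _ = _ := by ring
  have hlim := ((tendsto_pow_atTop_nhds_zero_of_lt_one (by positivity) hq).const_mul
    (D * 2 ^ α)).add ((tendsto_pow_mul_exp_neg_mul_pow hm₂.le hC₂ hr).const_mul C₁)
  rw [mul_zero, mul_zero, add_zero] at hlim
  exact squeeze_zero' (Eventually.of_forall fun k => by positivity) hbound hlim

/-- Abstract form of the key estimate in Corollary 1.5: if `W ≥ 0` has a polynomial left
tail `P(W ≤ ε) ≤ D·ε^α`, the `Z_k` concentrate around `W·m₁^k` with stretched-exponential
error `P(|Z_k/m₁^k − W| ≥ ε) ≤ C₁·exp(−C₂·ε^{2/3}·m₁^{k/3})`, and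
`m₁ > m₂^{1/α}·m₃`, `m₁ > m₂^{2/α}` (with `m₁ > m₃ > m₂ > 1`), then
`m₂^k·P(Z_k ≤ m₃^k) → 0` as `k → ∞`. -/
theorem small_generation_prob_decay {Ω : Type*} [MeasurableSpace Ω]
    (μ : Measure Ω) [IsProbabilityMeasure μ]
    (W : Ω → ℝ) (hWmeas : Measurable W) (hWnn : ∀ ω, 0 ≤ W ω)
    (Z : ℕ → Ω → ℝ) (hZmeas : ∀ k, Measurable (Z k)) (hZnn : ∀ k : ℕ, 1 ≤ k → ∀ ω, 0 ≤ Z k ω)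
    (m₁ m₂ m₃ : ℝ) (h2 : 1 < m₂) (h32 : m₂ < m₃) (h13 : m₃ < m₁)
    (α D C₁ C₂ : ℝ) (hα : 0 < α) (hD : 0 < D) (hC₁ : 0 < C₁) (hC₂ : 0 < C₂)
    (htail : ∀ ε : ℝ, 0 < ε → ε ≤ 1 → (μ {ω | W ω ≤ ε}).toReal ≤ D * ε ^ α)
    (hconc : ∀ k : ℕ, 1 ≤ k → ∀ ε : ℝ, 0 < ε →
      (μ {ω | ε ≤ |Z k ω / m₁ ^ k - W ω|}).toReal
        ≤ C₁ * Real.exp (-C₂ * ε ^ ((2 : ℝ) / 3) * m₁ ^ ((k : ℝ) / 3)))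
    (hgap₁ : m₂ ^ ((1 : ℝ) / α) * m₃ < m₁) (hgap₂ : m₂ ^ ((2 : ℝ) / α) < m₁) :
    Tendsto (fun k : ℕ => m₂ ^ k * (μ {ω | Z k ω ≤ m₃ ^ k}).toReal) atTop (nhds 0) :=
  small_generation_prob_decay_general μ W Z m₁ m₂ m₃ h2 h32 α D C₁ C₂ hα hC₂ htail hconc hgap₁ hgap₂
end

section
/- Let (Ω, F, P) be a probability space, let W ≥ 0 be a random variable and (Z_k)_{k≥1} a sequence of random variables each taking values in the positive integers (so Z_k ≥ 1). Let m₁ > m₃ > m₂ > 1 be real numbers and suppose there exist constants α, D, C₁, C₂ > 0 such that: (a) P(W ≤ ε) ≤ D·ε^α for all ε ∈ (0, 1]; (b) P(|Z_k/m₁^k − W| ≥ ε) ≤ C₁·exp(−C₂·ε^{2/3}·m₁^{k/3}) for all k ≥ 1 and all ε > 0; (c) m₁ > m₂^{1/α}·m₃ and m₁ > m₂^{2/α}. Then m₂^k · E[1/Z_k] → 0 as k → ∞. -/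
open MeasureTheory Filter

/-!
Split `E[1/Z_k]` on the event `Z_k ≤ m₃^k`: off it `1/Z_k < m₃^{-k}`, contributing
`(m₂/m₃)^k`. On it, `Z_k/m₁^k ≤ r^k` for any `r ≥ m₃/m₁`, so either `W ≤ 2r^k` (probability
`≲ (r^α)^k` by the left tail of `W`) or `Z_k/m₁^k` is `r^k` away from `W` (probability
`≲ exp(-C₂ (r²m₁)^{k/3})`). The gap conditions are exactly what is needed to choose `r` with
`m₃/m₁ < r`, `r²m₁ > 1` and `m₂ r^α < 1`, which makes all three terms `o(m₂^{-k})`.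
-/

theorem tendsto_pow_mul_exp_neg_mul_pow_atTop_nhds_zero {b c s : ℝ} (hb : 0 < b) (hc : 0 < c)
    (hs : 1 < s) : Tendsto (fun k : ℕ => b ^ k * Real.exp (-c * s ^ k)) atTop (nhds 0) := by
  -- `b ^ k = (s ^ k) ^ logb s b`, so this is `x ^ logb s b * exp (-c * x)` along `x = s ^ k`.
  refine ((tendsto_rpow_mul_exp_neg_mul_atTop_nhds_zero (Real.logb s b) c hc).comp
    (tendsto_pow_atTop_atTop_of_one_lt hs)).congr fun k => ?_
  simp only [Function.comp_apply]
  rw [← Real.rpow_pow_comm (by positivity), Real.rpow_logb (by positivity) hs.ne' hb]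

theorem integral_one_div_le_measureReal_add {Ω : Type*} [MeasurableSpace Ω] {μ : Measure Ω}
    [IsProbabilityMeasure μ] {X W : Ω → ℝ} (hX : Measurable X) (hX₁ : ∀ ω, 1 ≤ X ω)
    {a t δ : ℝ} (ha : 0 < a) (ht : 0 < t) (htδ : t ≤ δ * a) :
    ∫ ω, 1 / X ω ∂μ
      ≤ μ.real {ω | W ω ≤ 2 * δ} + μ.real {ω | δ ≤ |X ω / a - W ω|} + t⁻¹ := by
  set A := {ω | X ω ≤ t}
  have hA : MeasurableSet A := measurableSet_le hX measurable_const
  have hsplit : ∀ ω, 1 / X ω ≤ A.indicator 1 ω + t⁻¹ := by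
    intro ω
    by_cases hω : ω ∈ A
    · rw [Set.indicator_of_mem hω, Pi.one_apply]
      exact (div_le_one_of_le₀ (hX₁ ω) (zero_le_one.trans (hX₁ ω))).trans
        (le_add_of_nonneg_right (inv_pos.2 ht).le)
    · rw [Set.indicator_of_notMem hω, zero_add, one_div]
      exact inv_anti₀ ht (le_of_lt (not_le.1 hω))
  have hcover : A ⊆ {ω | W ω ≤ 2 * δ} ∪ {ω | δ ≤ |X ω / a - W ω|} := by
    intro ω hω
    by_contra! h
    simp only [Set.mem_union, Set.mem_ofPred_eq, not_or, not_le] at h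
    have : X ω / a ≤ δ := (div_le_iff₀ ha).2 (hω.trans htδ)
    linarith [le_abs_self (X ω / a - W ω), neg_abs_le (X ω / a - W ω)]
  calc ∫ ω, 1 / X ω ∂μ ≤ ∫ ω, A.indicator 1 ω + t⁻¹ ∂μ :=
        integral_mono_of_nonneg (Eventually.of_forall fun ω => by
            have := hX₁ ω; simp only [Pi.zero_apply]; positivity)
          (((integrable_const 1).indicator hA).add (integrable_const _))
          (Eventually.of_forall hsplit)
    _ = μ.real A + t⁻¹ := by
        rw [integral_add ((integrable_const 1).indicator hA) (integrable_const _),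
          integral_indicator_one hA, integral_const, probReal_univ, one_smul]
    _ ≤ _ := by gcongr; exact (measureReal_mono hcover).trans (measureReal_union_le _ _)

theorem exists_decay_rate {m₁ m₂ m₃ α : ℝ} (h2 : 1 < m₂) (hα : 0 < α)
    (hgap₁ : m₂ ^ ((1 : ℝ) / α) * m₃ < m₁) (hgap₂ : m₂ ^ ((2 : ℝ) / α) < m₁) :
    ∃ r, 0 < r ∧ r < 1 ∧ m₃ < r * m₁ ∧ 1 < r ^ 2 * m₁ ∧ m₂ * r ^ α < 1 := by
  set p := m₂ ^ ((1 : ℝ) / α) with hp_def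
  have hm₂ : 0 < m₂ := one_pos.trans h2
  have hp : 1 < p := Real.one_lt_rpow h2 (by positivity)
  have hp₂ : p ^ 2 < m₁ := by
    rwa [← Real.rpow_mul_natCast hm₂.le, div_mul_eq_mul_div, one_mul]
  have hm₁ : 0 < m₁ := (by positivity : (0 : ℝ) < _).trans hp₂
  have hsqrt : p < √m₁ := Real.lt_sqrt_of_sq_lt hp₂
  obtain ⟨r, hur, hrp_inv⟩ : ∃ r, max (m₃ / m₁) (√m₁)⁻¹ < r ∧ r < p⁻¹ := by
    refine exists_between (max_lt ?_ (inv_strictAnti₀ (by linarith) hsqrt))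
    rw [div_lt_iff₀ hm₁, ← div_eq_inv_mul, lt_div_iff₀ (by linarith)]
    linarith
  obtain ⟨hm₃r, hsqrtr⟩ := max_lt_iff.1 hur
  have hr : 0 < r := (inv_pos.2 (Real.sqrt_pos.2 hm₁)).trans hsqrtr
  have hrp : r * p < 1 := by rwa [← lt_div_iff₀ (by linarith), one_div]
  refine ⟨r, hr, by nlinarith, (div_lt_iff₀ hm₁).1 hm₃r, ?_, ?_⟩
  · have : 1 < r * √m₁ := by rwa [inv_lt_iff_one_lt_mul₀ (Real.sqrt_pos.2 hm₁)] at hsqrtr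
    nlinarith [Real.sq_sqrt hm₁.le]
  · calc m₂ * r ^ α = (r * p) ^ α := by
          rw [Real.mul_rpow hr.le (by positivity), hp_def, one_div,
            Real.rpow_inv_rpow hm₂.le hα.ne', mul_comm]
      _ < 1 := Real.rpow_lt_one (by positivity) hrp hα

theorem pow_rpow_two_div_three_mul_rpow (r m : ℝ) (hr : 0 ≤ r) (hm : 0 ≤ m) (k : ℕ) :
    (r ^ k) ^ ((2 : ℝ) / 3) * m ^ ((k : ℝ) / 3) = ((r ^ 2 * m) ^ ((1 : ℝ) / 3)) ^ k := by
  rw [← Real.rpow_mul_natCast (by positivity), Real.mul_rpow (by positivity) hm,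
    ← Real.rpow_natCast r, ← Real.rpow_natCast r, ← Real.rpow_mul hr, ← Real.rpow_mul hr]
  ring_nf

theorem inverse_generation_moment_decay_general {Ω : Type*} [MeasurableSpace Ω]
    (μ : Measure Ω) [IsProbabilityMeasure μ]
    (W : Ω → ℝ)
    (Z : ℕ → Ω → ℕ) (hZmeas : ∀ k, Measurable (Z k)) (hZpos : ∀ k : ℕ, 1 ≤ k → ∀ ω, 1 ≤ Z k ω)
    (m₁ m₂ m₃ : ℝ) (h2 : 1 < m₂) (h32 : m₂ < m₃)
    (α D C₁ C₂ : ℝ) (hα : 0 < α) (hC₂ : 0 < C₂)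
    (htail : ∀ ε : ℝ, 0 < ε → ε ≤ 1 → (μ {ω | W ω ≤ ε}).toReal ≤ D * ε ^ α)
    (hconc : ∀ k : ℕ, 1 ≤ k → ∀ ε : ℝ, 0 < ε →
      (μ {ω | ε ≤ |(Z k ω : ℝ) / m₁ ^ k - W ω|}).toReal
        ≤ C₁ * Real.exp (-C₂ * ε ^ ((2 : ℝ) / 3) * m₁ ^ ((k : ℝ) / 3)))
    (hgap₁ : m₂ ^ ((1 : ℝ) / α) * m₃ < m₁) (hgap₂ : m₂ ^ ((2 : ℝ) / α) < m₁) :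
    Tendsto (fun k : ℕ => m₂ ^ k * ∫ ω, 1 / (Z k ω : ℝ) ∂μ) atTop (nhds 0) := by
  obtain ⟨r, hr, hr₁, hm₃r, hrm₁, hm₂r⟩ := exists_decay_rate h2 hα hgap₁ hgap₂
  have hm₂ : 0 < m₂ := one_pos.trans h2
  have hm₃ : 0 < m₃ := hm₂.trans h32
  have hm₁ : 0 < m₁ := pos_of_mul_pos_right (hm₃.trans hm₃r) hr.le
  set s := (r ^ 2 * m₁) ^ ((1 : ℝ) / 3)
  have hs : 1 < s := Real.one_lt_rpow hrm₁ (by norm_num)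
  have hbound : Tendsto (fun k : ℕ => D * 2 ^ α * (m₂ * r ^ α) ^ k
      + C₁ * (m₂ ^ k * Real.exp (-C₂ * s ^ k)) + (m₂ / m₃) ^ k) atTop (nhds 0) := by
    have h₁ := tendsto_pow_atTop_nhds_zero_of_lt_one (by positivity : 0 ≤ m₂ * r ^ α) hm₂r
    have h₂ := tendsto_pow_mul_exp_neg_mul_pow_atTop_nhds_zero hm₂ hC₂ hs
    have h₃ :=
      tendsto_pow_atTop_nhds_zero_of_lt_one (div_pos hm₂ hm₃).le ((div_lt_one hm₃).2 h32)
    simpa using ((h₁.const_mul (D * 2 ^ α)).add (h₂.const_mul C₁)).add h₃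
  have hsmall : ∀ᶠ k : ℕ in atTop, 2 * r ^ k ≤ 1 :=
    ((tendsto_pow_atTop_nhds_zero_of_lt_one hr.le hr₁).const_mul 2).eventually_le_const
      (by norm_num)
  refine squeeze_zero' (Eventually.of_forall fun k => mul_nonneg (by positivity)
    (integral_nonneg fun ω => by positivity)) ?_ hbound
  filter_upwards [eventually_ge_atTop 1, hsmall] with k hk hrk
  have hmoment := integral_one_div_le_measureReal_add (μ := μ) (W := W)
    (X := fun ω => (Z k ω : ℝ)) (measurable_from_nat.comp (hZmeas k))
    (fun ω => by exact_mod_cast hZpos k hk ω) (pow_pos hm₁ k) (pow_pos hm₃ k)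
    (by rw [← mul_pow]; exact pow_le_pow_left₀ hm₃.le hm₃r.le k)
  calc m₂ ^ k * ∫ ω, 1 / (Z k ω : ℝ) ∂μ
      ≤ m₂ ^ k * (D * (2 * r ^ k) ^ α
          + C₁ * Real.exp (-C₂ * (r ^ k) ^ ((2 : ℝ) / 3) * m₁ ^ ((k : ℝ) / 3)) + (m₃ ^ k)⁻¹) := by
        gcongr
        refine hmoment.trans ?_
        gcongr
        exacts [htail _ (by positivity) hrk, hconc k hk _ (by positivity)]
    _ = _ := by
        rw [mul_assoc (-C₂), pow_rpow_two_div_three_mul_rpow r m₁ hr.le hm₁.le,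
          Real.mul_rpow zero_le_two (by positivity), ← Real.rpow_pow_comm hr.le, div_pow, mul_pow]
        ring

/-- Abstract form of `m₂^k·E[1/Z_k] → 0`: if the positive-integer-valued `Z_k` concentrate
around `W·m₁^k` where `W ≥ 0` has a polynomial left tail `P(W ≤ ε) ≤ D·ε^α`, and
`m₁ > m₂^{1/α}·m₃`, `m₁ > m₂^{2/α}` (with `m₁ > m₃ > m₂ > 1`), then
`m₂^k·E[1/Z_k] → 0` as `k → ∞`. -/
theorem inverse_generation_moment_decay {Ω : Type*} [MeasurableSpace Ω]
    (μ : Measure Ω) [IsProbabilityMeasure μ]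
    (W : Ω → ℝ) (hWmeas : Measurable W) (hWnn : ∀ ω, 0 ≤ W ω)
    (Z : ℕ → Ω → ℕ) (hZmeas : ∀ k, Measurable (Z k)) (hZpos : ∀ k : ℕ, 1 ≤ k → ∀ ω, 1 ≤ Z k ω)
    (m₁ m₂ m₃ : ℝ) (h2 : 1 < m₂) (h32 : m₂ < m₃) (h13 : m₃ < m₁)
    (α D C₁ C₂ : ℝ) (hα : 0 < α) (hD : 0 < D) (hC₁ : 0 < C₁) (hC₂ : 0 < C₂)
    (htail : ∀ ε : ℝ, 0 < ε → ε ≤ 1 → (μ {ω | W ω ≤ ε}).toReal ≤ D * ε ^ α)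
    (hconc : ∀ k : ℕ, 1 ≤ k → ∀ ε : ℝ, 0 < ε →
      (μ {ω | ε ≤ |(Z k ω : ℝ) / m₁ ^ k - W ω|}).toReal
        ≤ C₁ * Real.exp (-C₂ * ε ^ ((2 : ℝ) / 3) * m₁ ^ ((k : ℝ) / 3)))
    (hgap₁ : m₂ ^ ((1 : ℝ) / α) * m₃ < m₁) (hgap₂ : m₂ ^ ((2 : ℝ) / α) < m₁) :
    Tendsto (fun k : ℕ => m₂ ^ k * ∫ ω, 1 / (Z k ω : ℝ) ∂μ) atTop (nhds 0) :=
  inverse_generation_moment_decay_general μ W Z hZmeas hZpos m₁ m₂ m₃ h2 h32 α D C₁ C₂ hα hC₂ htail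
    hconc hgap₁ hgap₂
end

section
/- Let (Ω, F, P) be a probability space and m > 1 a real number. For each k ≥ 1 let Z_{1,k} and Z_{2,k} be random variables taking values in the positive integers, and let A_k, B_k be random variables taking values in the positive integers with A_k ≤ B_k almost surely. Assume: (i) m^k·E[1/Z_{1,k}] → 0 as k → ∞; (ii) A_k/m^k converges almost surely to a random variable W with 0 < W < ∞ almost surely; (iii) A_k/B_k → 0 almost surely. Then E[1/A_k − 1/B_k] > 0 for all sufficiently large k, and E[ (1/Z_{1,k} − 1/Z_{2,k})·1{Z_{1,k} < Z_{2,k}} ] / E[ 1/A_k − 1/B_k ] → 0 as k → ∞. -/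
/-!
Writing `D_k = E[1/A_k − 1/B_k]`, the hypotheses (ii) and (iii) give
`m^k (1/A_k − 1/B_k) = (A_k/m^k)⁻¹ (1 − A_k/B_k) → 1/W` almost surely, so Fatou's lemma yields
`liminf m^k D_k ≥ E[1/W] > 0`. The numerator is at most `E[1/Z_{1,k}]`, hence the ratio is
`O(m^k E[1/Z_{1,k}])`, which tends to `0` by (i).
-/

open MeasureTheory Filter Topology

theorem tendsto_mul_one_div_sub_one_div {s a b : ℕ → ℝ} {w : ℝ} (hw : w ≠ 0)
    (ha : Tendsto (fun k => a k / s k) atTop (𝓝 w))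
    (hab : Tendsto (fun k => a k / b k) atTop (𝓝 0)) :
    Tendsto (fun k => s k * (1 / a k - 1 / b k)) atTop (𝓝 w⁻¹) := by
  have hlim : Tendsto (fun k => (a k / s k)⁻¹ * (1 - a k / b k)) atTop (𝓝 (w⁻¹ * (1 - 0))) :=
    (ha.inv₀ hw).mul (tendsto_const_nhds.sub hab)
  rw [sub_zero, mul_one] at hlim
  refine hlim.congr' ?_
  filter_upwards [ha.eventually_ne hw] with k hk
  have ha0 : a k ≠ 0 := fun h => hk (by simp [h])
  rw [inv_div]
  field_simp

theorem tendsto_div_of_le_of_eventually_le_mul {s u N D : ℕ → ℝ} {c : ℝ} (hc : 0 < c)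
    (hs : ∀ k, 0 < s k) (hN_nonneg : ∀ k, 0 ≤ N k) (hN_le : ∀ k, N k ≤ u k)
    (hu : Tendsto (fun k => s k * u k) atTop (𝓝 0)) (hD : ∀ᶠ k in atTop, c ≤ s k * D k) :
    Tendsto (fun k => N k / D k) atTop (𝓝 0) := by
  have hD_pos : ∀ᶠ k in atTop, 0 < D k :=
    hD.mono fun k hk => pos_of_mul_pos_right (hc.trans_le hk) (hs k).le
  refine squeeze_zero' ?_ ?_ (by simpa using hu.div_const c)
  · filter_upwards [hD_pos] with k hk
    exact div_nonneg (hN_nonneg k) hk.le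
  · filter_upwards [hD, hD_pos] with k hk hk_pos
    calc N k / D k ≤ u k / D k := div_le_div_of_nonneg_right (hN_le k) hk_pos.le
      _ = s k * u k / (s k * D k) := (mul_div_mul_left _ _ (hs k).ne').symm
      _ ≤ s k * u k / c :=
          div_le_div_of_nonneg_left (mul_nonneg (hs k).le ((hN_nonneg k).trans (hN_le k))) hc hk

theorem one_div_natCast_sub_one_div_natCast_nonneg {a b : ℕ} (ha : 1 ≤ a) (hab : a ≤ b) :
    0 ≤ 1 / (a : ℝ) - 1 / (b : ℝ) :=
  sub_nonneg.2 (one_div_le_one_div_of_le (by exact_mod_cast ha) (by exact_mod_cast hab))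

theorem ite_lt_one_div_natCast_sub_nonneg {a b : ℕ} (ha : 1 ≤ a) :
    0 ≤ if a < b then 1 / (a : ℝ) - 1 / (b : ℝ) else 0 := by
  split_ifs with h
  · exact one_div_natCast_sub_one_div_natCast_nonneg ha h.le
  · exact le_rfl

theorem ite_lt_one_div_natCast_sub_le {a b : ℕ} :
    (if a < b then 1 / (a : ℝ) - 1 / (b : ℝ) else 0) ≤ 1 / (a : ℝ) := by
  split_ifs
  · exact sub_le_self _ (by positivity)
  · positivity

section Integrals

variable {Ω : Type*} [MeasurableSpace Ω] {μ : Measure Ω}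

theorem exists_pos_eventually_le_integral_of_tendsto_ae [NeZero μ] {f : ℕ → Ω → ℝ} {F : Ω → ℝ}
    (hf : ∀ k, Integrable (f k) μ) (hf_nonneg : ∀ k, 0 ≤ᵐ[μ] f k) (hF : ∀ᵐ ω ∂μ, 0 < F ω)
    (hlim : ∀ᵐ ω ∂μ, Tendsto (fun k => f k ω) atTop (𝓝 (F ω))) :
    ∃ c > 0, ∀ᶠ k in atTop, c ≤ ∫ ω, f k ω ∂μ := by
  have hF_meas : AEMeasurable F μ :=
    aemeasurable_of_tendsto_metrizable_ae' (fun k => (hf k).aemeasurable) hlim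
  have hF_lintegral_pos : 0 < ∫⁻ ω, ENNReal.ofReal (F ω) ∂μ := by
    refine pos_iff_ne_zero.2 fun h0 => NeZero.ne μ (ae_eq_bot.1 (eventually_false_iff_eq_bot.1 ?_))
    filter_upwards [(lintegral_eq_zero_iff' hF_meas.ennreal_ofReal).1 h0, hF] with ω h0 hpos
    simp only [Pi.zero_apply, ENNReal.ofReal_eq_zero] at h0
    linarith
  have hfatou : ∫⁻ ω, ENNReal.ofReal (F ω) ∂μ
      ≤ liminf (fun k => ∫⁻ ω, ENNReal.ofReal (f k ω) ∂μ) atTop :=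
    calc ∫⁻ ω, ENNReal.ofReal (F ω) ∂μ
        = ∫⁻ ω, liminf (fun k => ENNReal.ofReal (f k ω)) atTop ∂μ := by
          refine lintegral_congr_ae ?_
          filter_upwards [hlim] with ω hω
          exact (ENNReal.tendsto_ofReal hω).liminf_eq.symm
      _ ≤ _ := lintegral_liminf_le' fun k => (hf k).aemeasurable.ennreal_ofReal
  obtain ⟨c, -, hc_pos, hc_lt⟩ := ENNReal.lt_iff_exists_real_btwn.1 hF_lintegral_pos
  refine ⟨c, ENNReal.ofReal_pos.1 hc_pos, ?_⟩
  filter_upwards [eventually_lt_of_lt_liminf (hc_lt.trans_le hfatou)] with k hk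
  rw [integral_eq_lintegral_of_nonneg_ae (hf_nonneg k) (hf k).aestronglyMeasurable]
  exact (ENNReal.ofReal_le_iff_le_toReal (hf k).lintegral_lt_top.ne).1 hk.le

theorem integrable_one_div_natCast [IsFiniteMeasure μ] {X : Ω → ℕ} (hX : Measurable X) :
    Integrable (fun ω => 1 / (X ω : ℝ)) μ := by
  refine (integrable_const (1 : ℝ)).mono'
    ((measurable_from_top.comp hX).const_div 1).aestronglyMeasurable (ae_of_all _ fun ω => ?_)
  rw [one_div, norm_inv, Real.norm_natCast]
  exact Nat.cast_inv_le_one _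

end Integrals

theorem cutoff_ratio_vanishes_general {Ω : Type*} [MeasurableSpace Ω]
    (μ : Measure Ω) [IsProbabilityMeasure μ]
    (m : ℝ) (hm : 1 < m)
    (Z₁ Z₂ A B : ℕ → Ω → ℕ)
    (hZ₁meas : ∀ k, Measurable (Z₁ k))
    (hAmeas : ∀ k, Measurable (A k)) (hBmeas : ∀ k, Measurable (B k))
    (hZ₁pos : ∀ k ω, 1 ≤ Z₁ k ω)
    (hApos : ∀ k ω, 1 ≤ A k ω)
    (hAB : ∀ k : ℕ, ∀ᵐ ω ∂μ, A k ω ≤ B k ω)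
    (W : Ω → ℝ) (hWpos : ∀ᵐ ω ∂μ, 0 < W ω)
    (hi : Tendsto (fun k : ℕ => m ^ k * ∫ ω, 1 / (Z₁ k ω : ℝ) ∂μ) atTop (nhds 0))
    (hii : ∀ᵐ ω ∂μ, Tendsto (fun k : ℕ => (A k ω : ℝ) / m ^ k) atTop (nhds (W ω)))
    (hiii : ∀ᵐ ω ∂μ, Tendsto (fun k : ℕ => (A k ω : ℝ) / (B k ω : ℝ)) atTop (nhds 0)) :
    (∃ N : ℕ, ∀ k : ℕ, N ≤ k → 0 < ∫ ω, (1 / (A k ω : ℝ) - 1 / (B k ω : ℝ)) ∂μ) ∧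
    Tendsto
      (fun k : ℕ =>
        (∫ ω, (if Z₁ k ω < Z₂ k ω then 1 / (Z₁ k ω : ℝ) - 1 / (Z₂ k ω : ℝ) else 0) ∂μ)
          / ∫ ω, (1 / (A k ω : ℝ) - 1 / (B k ω : ℝ)) ∂μ) atTop (nhds 0) := by
  have hm_pow : ∀ k, 0 < m ^ k := fun k => pow_pos (zero_lt_one.trans hm) k
  have hD_int : ∀ k, Integrable (fun ω => 1 / (A k ω : ℝ) - 1 / (B k ω : ℝ)) μ := fun k =>
    (integrable_one_div_natCast (hAmeas k)).sub (integrable_one_div_natCast (hBmeas k))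
  have hf_nonneg : ∀ k, ∀ᵐ ω ∂μ, 0 ≤ m ^ k * (1 / (A k ω : ℝ) - 1 / (B k ω : ℝ)) := fun k =>
    (hAB k).mono fun ω hω =>
      mul_nonneg (hm_pow k).le (one_div_natCast_sub_one_div_natCast_nonneg (hApos k ω) hω)
  have hf_lim : ∀ᵐ ω ∂μ, Tendsto (fun k => m ^ k * (1 / (A k ω : ℝ) - 1 / (B k ω : ℝ)))
      atTop (𝓝 (W ω)⁻¹) := by
    filter_upwards [hWpos, hii, hiii] with ω hW hA hR
    exact tendsto_mul_one_div_sub_one_div hW.ne' hA hR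
  obtain ⟨c, hc, hc_le⟩ := exists_pos_eventually_le_integral_of_tendsto_ae
    (fun k => (hD_int k).const_mul (m ^ k)) hf_nonneg (hWpos.mono fun ω hω => inv_pos.2 hω) hf_lim
  simp only [integral_const_mul] at hc_le
  refine ⟨eventually_atTop.1 (hc_le.mono fun k hk =>
    pos_of_mul_pos_right (hc.trans_le hk) (hm_pow k).le), ?_⟩
  refine tendsto_div_of_le_of_eventually_le_mul hc hm_pow (fun k => ?_) (fun k => ?_) hi hc_le
  · exact integral_nonneg fun ω => ite_lt_one_div_natCast_sub_nonneg (hZ₁pos k ω)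
  · exact integral_mono_of_nonneg
      (ae_of_all _ fun ω => ite_lt_one_div_natCast_sub_nonneg (hZ₁pos k ω))
      (integrable_one_div_natCast (hZ₁meas k)) (ae_of_all _ fun ω => ite_lt_one_div_natCast_sub_le)

/-- Abstract form of the vanishing ratio in Corollary 1.5: with positive-integer-valued
`Z_{1,k}, Z_{2,k}` and a monotone pair `A_k ≤ B_k`, if `m^k·E[1/Z_{1,k}] → 0`,
`A_k/m^k → W` a.s. with `0 < W < ∞` a.s., and `A_k/B_k → 0` a.s., then
`E[1/A_k − 1/B_k] > 0` for all large `k` and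
`E[(1/Z_{1,k} − 1/Z_{2,k})·1{Z_{1,k} < Z_{2,k}}] / E[1/A_k − 1/B_k] → 0`. -/
theorem cutoff_ratio_vanishes {Ω : Type*} [MeasurableSpace Ω]
    (μ : Measure Ω) [IsProbabilityMeasure μ]
    (m : ℝ) (hm : 1 < m)
    (Z₁ Z₂ A B : ℕ → Ω → ℕ)
    (hZ₁meas : ∀ k, Measurable (Z₁ k)) (hZ₂meas : ∀ k, Measurable (Z₂ k))
    (hAmeas : ∀ k, Measurable (A k)) (hBmeas : ∀ k, Measurable (B k))
    (hZ₁pos : ∀ k ω, 1 ≤ Z₁ k ω) (hZ₂pos : ∀ k ω, 1 ≤ Z₂ k ω)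
    (hApos : ∀ k ω, 1 ≤ A k ω) (hBpos : ∀ k ω, 1 ≤ B k ω)
    (hAB : ∀ k : ℕ, ∀ᵐ ω ∂μ, A k ω ≤ B k ω)
    (W : Ω → ℝ) (hWmeas : Measurable W) (hWpos : ∀ᵐ ω ∂μ, 0 < W ω)
    (hi : Tendsto (fun k : ℕ => m ^ k * ∫ ω, 1 / (Z₁ k ω : ℝ) ∂μ) atTop (nhds 0))
    (hii : ∀ᵐ ω ∂μ, Tendsto (fun k : ℕ => (A k ω : ℝ) / m ^ k) atTop (nhds (W ω)))
    (hiii : ∀ᵐ ω ∂μ, Tendsto (fun k : ℕ => (A k ω : ℝ) / (B k ω : ℝ)) atTop (nhds 0)) :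
    (∃ N : ℕ, ∀ k : ℕ, N ≤ k → 0 < ∫ ω, (1 / (A k ω : ℝ) - 1 / (B k ω : ℝ)) ∂μ) ∧
    Tendsto
      (fun k : ℕ =>
        (∫ ω, (if Z₁ k ω < Z₂ k ω then 1 / (Z₁ k ω : ℝ) - 1 / (Z₂ k ω : ℝ) else 0) ∂μ)
          / ∫ ω, (1 / (A k ω : ℝ) - 1 / (B k ω : ℝ)) ∂μ) atTop (nhds 0) :=
  cutoff_ratio_vanishes_general μ m hm Z₁ Z₂ A B hZ₁meas hAmeas hBmeas hZ₁pos hApos hAB W hWpos hi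
    hii hiii
end
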